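/- arXiv:2209.01531 — 3 statements merged into one kernel-verified Lean document; each statement's English description precedes it below -/
import Mathlib

section
/- If A, B, C are Hermitian operators on a finite-dimensional Hilbert space that pairwise anticommute and satisfy A² = B² = C² = I, then for any density matrix ρ, (Tr(ρA))² + (Tr(ρB))² + (Tr(ρC))² ≤ 1. -/
/-!
Put `a = Tr(ρA)`, `b = Tr(ρB)`, `c = Tr(ρC)` (real, as `ρ` and the observables are Hermitian) and
`M = aA + bB + cC`. The anticommutation relations make the cross terms of `M²` cancel, so
`M² = s • 1` with `s = a² + b² + c²`, while `Tr(ρM) = s`. Nonnegativity of the variance,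
`Tr(ρM²) - Tr(ρM)² = Tr(ρ(M - s)²) ≥ 0`, then reads `s - s² ≥ 0`, i.e. `s ≤ 1`.
-/

open Matrix Complex
open scoped ComplexOrder

lemma mul_self_smul_add_smul_add_smul_of_anticomm {R S : Type*} [CommRing R] [Ring S]
    [Algebra R S] {A B C : S} (hA2 : A * A = 1) (hB2 : B * B = 1) (hC2 : C * C = 1)
    (hAB : A * B + B * A = 0) (hAC : A * C + C * A = 0) (hBC : B * C + C * B = 0) (a b c : R) :
    (a • A + b • B + c • C) * (a • A + b • B + c • C) = (a ^ 2 + b ^ 2 + c ^ 2) • (1 : S) := by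
  calc (a • A + b • B + c • C) * (a • A + b • B + c • C)
      = (a ^ 2) • (A * A) + (b ^ 2) • (B * B) + (c ^ 2) • (C * C) + (a * b) • (A * B + B * A)
          + (a * c) • (A * C + C * A) + (b * c) • (B * C + C * B) := by
        simp only [add_mul, mul_add, smul_mul_smul_comm, smul_add, sq]
        module
    _ = _ := by rw [hA2, hB2, hC2, hAB, hAC, hBC]; module

namespace Matrix

variable {ι 𝕜 : Type*} [Fintype ι] [RCLike 𝕜]

lemma IsHermitian.ofReal_re_trace_mul {ρ M : Matrix ι ι 𝕜} (hρ : ρ.IsHermitian)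
    (hM : M.IsHermitian) : ((RCLike.re (ρ * M).trace : ℝ) : 𝕜) = (ρ * M).trace :=
  RCLike.conj_eq_iff_re.mp <| by
    rw [starRingEnd_apply, ← trace_conjTranspose, conjTranspose_mul, hM.eq, hρ.eq, trace_mul_comm]

lemma IsHermitian.norm_trace_mul_sq {ρ M : Matrix ι ι 𝕜} (hρ : ρ.IsHermitian)
    (hM : M.IsHermitian) : ‖(ρ * M).trace‖ ^ 2 = RCLike.re (ρ * M).trace ^ 2 := by
  rw [← hρ.ofReal_re_trace_mul hM, RCLike.norm_ofReal, sq_abs, RCLike.ofReal_re]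

lemma PosSemidef.trace_mul_conjTranspose_mul_self_nonneg {ρ : Matrix ι ι 𝕜}
    (hρ : ρ.PosSemidef) (X : Matrix ι ι 𝕜) : 0 ≤ (ρ * (Xᴴ * X)).trace := by
  rw [← Matrix.mul_assoc, trace_mul_comm, ← Matrix.mul_assoc]
  exact (hρ.mul_mul_conjTranspose_same X).trace_nonneg

lemma PosSemidef.sq_re_trace_mul_le [DecidableEq ι] {ρ M : Matrix ι ι 𝕜} (hρ : ρ.PosSemidef)
    (hTr : ρ.trace = 1) (hM : M.IsHermitian) :
    RCLike.re (ρ * M).trace ^ 2 ≤ RCLike.re (ρ * (M * M)).trace := by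
  set m : 𝕜 := (RCLike.re (ρ * M).trace : 𝕜)
  have hm : (ρ * M).trace = m := (hρ.1.ofReal_re_trace_mul hM).symm
  set X := M - m • (1 : Matrix ι ι 𝕜)
  have hX : Xᴴ = X := by simp [X, hM.eq, m]
  have hvar : (ρ * (Xᴴ * X)).trace = (ρ * (M * M)).trace - m ^ 2 := by
    simp only [hX, X, sub_mul, mul_sub, Matrix.smul_mul, Matrix.mul_smul, Matrix.one_mul,
      Matrix.mul_one, trace_sub, trace_smul, hm, hTr, smul_eq_mul]
    ring
  have h := hρ.trace_mul_conjTranspose_mul_self_nonneg X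
  rw [hvar, RCLike.nonneg_iff] at h
  simpa [sub_nonneg, m] using h.1

end Matrix

/-- For pairwise anticommuting Hermitian involutions `A`, `B`, `C` and any density
matrix `ρ`, the expectation values satisfy `⟨A⟩² + ⟨B⟩² + ⟨C⟩² ≤ 1`. -/
theorem stmt2 {n : ℕ} (A B C ρ : Matrix (Fin n) (Fin n) ℂ)
    (hA : A.IsHermitian) (hB : B.IsHermitian) (hC : C.IsHermitian)
    (hA2 : A * A = 1) (hB2 : B * B = 1) (hC2 : C * C = 1)
    (hAB : A * B + B * A = 0) (hAC : A * C + C * A = 0) (hBC : B * C + C * B = 0)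
    (hρ : ρ.PosSemidef) (hTr : ρ.trace = 1) :
    ‖(ρ * A).trace‖ ^ 2 + ‖(ρ * B).trace‖ ^ 2 +
      ‖(ρ * C).trace‖ ^ 2 ≤ 1 := by
  rw [hρ.1.norm_trace_mul_sq hA, hρ.1.norm_trace_mul_sq hB, hρ.1.norm_trace_mul_sq hC]
  set a := RCLike.re (ρ * A).trace
  set b := RCLike.re (ρ * B).trace
  set c := RCLike.re (ρ * C).trace
  set s := a ^ 2 + b ^ 2 + c ^ 2
  set M := a • A + b • B + c • C
  have hM : M.IsHermitian := ((hA.smul (.all a)).add (hB.smul (.all b))).add (hC.smul (.all c))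
  have hMM : M * M = s • 1 :=
    mul_self_smul_add_smul_add_smul_of_anticomm hA2 hB2 hC2 hAB hAC hBC a b c
  have hρM : RCLike.re (ρ * M).trace = s := by
    simp only [M, mul_add, Matrix.mul_smul, trace_add, trace_smul, map_add, RCLike.smul_re, s]
    ring
  have hρMM : RCLike.re (ρ * (M * M)).trace = s := by
    simp [hMM, hTr]
  have hss := hρ.sq_re_trace_mul_le hTr hM
  rw [hρM, hρMM] at hss
  nlinarith [sq_nonneg a, sq_nonneg b, sq_nonneg c]
end

section
/- Let ρ be a density matrix on H_A ⊗ H_B that is separable, i.e., ρ = Σᵢ pᵢ ρ_Aⁱ ⊗ ρ_Bⁱ with pᵢ ≥ 0, Σpᵢ = 1 and ρ_Aⁱ, ρ_Bⁱ density matrices. Suppose X_A, Y_A, Z_A are pairwise anticommuting Hermitian involutions on H_A and X_B, Y_B, Z_B are pairwise anticommuting Hermitian involutions on H_B. Then |Tr(ρ (X_A⊗X_B))| + |Tr(ρ (Y_A⊗Y_B))| + |Tr(ρ (Z_A⊗Z_B))| ≤ 1. -/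
/-!
For a single state `σ` and anticommuting Hermitian involutions `A, B, C`, the observable
`M = a A + b B + c C` with `a, b, c` the expectations of `A, B, C` squares to `s • 1`, where
`s = a² + b² + c²`, and its expectation is `s`. Since a variance is nonnegative,
`s² = ⟨M⟩² ≤ ⟨M²⟩ = s`, hence `s ≤ 1`. For a product state the correlation `⟨S_A ⊗ S_B⟩`
factors, so Cauchy–Schwarz in `ℝ³` for the vectors of absolute expectations bounds the sum
of the three correlations by `1`; a separable state is a convex combination of product states.
-/

open Matrix Complex Kronecker
open scoped ComplexOrder

lemma smul_add_smul_add_smul_mul_self {R : Type*} [Ring R] [Algebra ℝ R] {A B C : R}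
    (hA : A * A = 1) (hB : B * B = 1) (hC : C * C = 1)
    (hAB : A * B + B * A = 0) (hAC : A * C + C * A = 0) (hBC : B * C + C * B = 0) (a b c : ℝ) :
    (a • A + b • B + c • C) * (a • A + b • B + c • C) = (a ^ 2 + b ^ 2 + c ^ 2) • (1 : R) := by
  simp only [add_mul, mul_add, smul_mul_smul, hA, hB, hC, eq_neg_of_add_eq_zero_right hAB,
    eq_neg_of_add_eq_zero_right hAC, eq_neg_of_add_eq_zero_right hBC]
  module

section Expectation

variable {d : Type*} [Fintype d]

lemma im_trace_mul_eq_zero {σ A : Matrix d d ℂ} (hσ : σ.IsHermitian) (hA : A.IsHermitian) :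
    (σ * A).trace.im = 0 := by
  refine conj_eq_iff_im.mp ?_
  rw [← star_def, ← trace_conjTranspose, conjTranspose_mul, hA.eq, hσ.eq, trace_mul_comm]

lemma norm_trace_mul_eq_abs_re {σ A : Matrix d d ℂ} (hσ : σ.IsHermitian) (hA : A.IsHermitian) :
    ‖(σ * A).trace‖ = |(σ * A).trace.re| :=
  (abs_re_eq_norm.mpr (im_trace_mul_eq_zero hσ hA)).symm

lemma sq_re_trace_mul_le_re_trace_mul_mul [DecidableEq d] {σ M : Matrix d d ℂ}
    (hσ : σ.PosSemidef) (hσ1 : σ.trace = 1) (hM : M.IsHermitian) :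
    (σ * M).trace.re ^ 2 ≤ (σ * (M * M)).trace.re := by
  set t := (σ * M).trace.re
  set N := M - t • (1 : Matrix d d ℂ)
  have hN : N.IsHermitian := hM.sub (isHermitian_one.smul (IsSelfAdjoint.all t))
  have hvar : 0 ≤ (σ * (N * N)).trace := by
    rw [← Matrix.mul_assoc, trace_mul_comm, ← Matrix.mul_assoc]
    nth_rewrite 2 [← hN.eq]
    exact (hσ.mul_mul_conjTranspose_same N).trace_nonneg
  have hexpand : (σ * (N * N)).trace.re = (σ * (M * M)).trace.re - t ^ 2 := by
    simp only [N, sub_mul, mul_sub, smul_mul_assoc, mul_smul_comm, one_mul, mul_one, smul_sub,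
      smul_smul, trace_sub, trace_smul, hσ1, sub_re, smul_re, one_re, smul_eq_mul]
    ring
  linarith [(nonneg_iff.mp hvar).1]

theorem norm_trace_mul_sq_add_sq_add_sq_le_one [DecidableEq d] {σ A B C : Matrix d d ℂ}
    (hσ : σ.PosSemidef) (hσ1 : σ.trace = 1)
    (hA : A.IsHermitian) (hB : B.IsHermitian) (hC : C.IsHermitian)
    (hA2 : A * A = 1) (hB2 : B * B = 1) (hC2 : C * C = 1)
    (hAB : A * B + B * A = 0) (hAC : A * C + C * A = 0) (hBC : B * C + C * B = 0) :
    ‖(σ * A).trace‖ ^ 2 + ‖(σ * B).trace‖ ^ 2 + ‖(σ * C).trace‖ ^ 2 ≤ 1 := by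
  rw [norm_trace_mul_eq_abs_re hσ.1 hA, norm_trace_mul_eq_abs_re hσ.1 hB,
    norm_trace_mul_eq_abs_re hσ.1 hC, sq_abs, sq_abs, sq_abs]
  set a := (σ * A).trace.re
  set b := (σ * B).trace.re
  set c := (σ * C).trace.re
  set M := a • A + b • B + c • C
  have hM : M.IsHermitian :=
    ((hA.smul (IsSelfAdjoint.all a)).add (hB.smul (IsSelfAdjoint.all b))).add
      (hC.smul (IsSelfAdjoint.all c))
  have hexp : (σ * M).trace.re = a ^ 2 + b ^ 2 + c ^ 2 := by
    simp only [M, mul_add, Matrix.mul_smul, trace_add, trace_smul, add_re, smul_re, smul_eq_mul]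
    ring
  have hexp_sq : (σ * (M * M)).trace.re = a ^ 2 + b ^ 2 + c ^ 2 := by
    rw [smul_add_smul_add_smul_mul_self hA2 hB2 hC2 hAB hAC hBC, Matrix.mul_smul, mul_one,
      trace_smul, hσ1, smul_re, one_re, smul_eq_mul, mul_one]
  have hvar := sq_re_trace_mul_le_re_trace_mul_mul hσ hσ1 hM
  rw [hexp, hexp_sq] at hvar
  nlinarith [sq_nonneg a, sq_nonneg b, sq_nonneg c]

end Expectation

lemma mul_add_mul_add_mul_le_one {a b c x y z : ℝ} (h : a ^ 2 + b ^ 2 + c ^ 2 ≤ 1)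
    (h' : x ^ 2 + y ^ 2 + z ^ 2 ≤ 1) : a * x + b * y + c * z ≤ 1 := by
  nlinarith [sq_nonneg (a - x), sq_nonneg (b - y), sq_nonneg (c - z)]

lemma norm_trace_sum_smul_kronecker_mul_le {ι m n : Type*} [Fintype ι] [Fintype m] [Fintype n]
    {p : ι → ℝ} (hp : ∀ i, 0 ≤ p i) (ρA : ι → Matrix m m ℂ) (ρB : ι → Matrix n n ℂ)
    (SA : Matrix m m ℂ) (SB : Matrix n n ℂ) :
    ‖((∑ i, (p i : ℂ) • (ρA i ⊗ₖ ρB i)) * (SA ⊗ₖ SB)).trace‖ ≤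
      ∑ i, p i * (‖(ρA i * SA).trace‖ * ‖(ρB i * SB).trace‖) := by
  rw [Finset.sum_mul, trace_sum]
  refine (norm_sum_le _ _).trans (Finset.sum_le_sum fun i _ => le_of_eq ?_)
  rw [smul_mul_assoc, trace_smul, ← mul_kronecker_mul, trace_kronecker, smul_eq_mul, norm_mul,
    norm_mul, norm_real, Real.norm_of_nonneg (hp i)]

/-- For a separable state `ρ = Σᵢ pᵢ ρ_Aⁱ ⊗ ρ_Bⁱ` and pairwise anticommuting Hermitian
involutions `X_A, Y_A, Z_A` on `H_A` and `X_B, Y_B, Z_B` on `H_B`, one has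
`|⟨X_A⊗X_B⟩| + |⟨Y_A⊗Y_B⟩| + |⟨Z_A⊗Z_B⟩| ≤ 1`. -/
theorem stmt3 {m n K : ℕ}
    (p : Fin K → ℝ) (hp : ∀ i, 0 ≤ p i) (hp1 : ∑ i, p i = 1)
    (ρA : Fin K → Matrix (Fin m) (Fin m) ℂ) (ρB : Fin K → Matrix (Fin n) (Fin n) ℂ)
    (hρA : ∀ i, (ρA i).PosSemidef ∧ (ρA i).trace = 1)
    (hρB : ∀ i, (ρB i).PosSemidef ∧ (ρB i).trace = 1)
    (XA YA ZA : Matrix (Fin m) (Fin m) ℂ) (XB YB ZB : Matrix (Fin n) (Fin n) ℂ)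
    (hXA : XA.IsHermitian) (hYA : YA.IsHermitian) (hZA : ZA.IsHermitian)
    (hXB : XB.IsHermitian) (hYB : YB.IsHermitian) (hZB : ZB.IsHermitian)
    (hXA2 : XA * XA = 1) (hYA2 : YA * YA = 1) (hZA2 : ZA * ZA = 1)
    (hXB2 : XB * XB = 1) (hYB2 : YB * YB = 1) (hZB2 : ZB * ZB = 1)
    (hXYA : XA * YA + YA * XA = 0) (hXZA : XA * ZA + ZA * XA = 0)
    (hYZA : YA * ZA + ZA * YA = 0)
    (hXYB : XB * YB + YB * XB = 0) (hXZB : XB * ZB + ZB * XB = 0)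
    (hYZB : YB * ZB + ZB * YB = 0)
    (ρ : Matrix (Fin m × Fin n) (Fin m × Fin n) ℂ)
    (hρ : ρ = ∑ i, ((p i : ℝ) : ℂ) • (ρA i ⊗ₖ ρB i)) :
    ‖(ρ * (XA ⊗ₖ XB)).trace‖ + ‖(ρ * (YA ⊗ₖ YB)).trace‖ +
      ‖(ρ * (ZA ⊗ₖ ZB)).trace‖ ≤ 1 := by
  subst hρ
  have hproduct (i : Fin K) :
      ‖(ρA i * XA).trace‖ * ‖(ρB i * XB).trace‖ + ‖(ρA i * YA).trace‖ * ‖(ρB i * YB).trace‖ +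
        ‖(ρA i * ZA).trace‖ * ‖(ρB i * ZB).trace‖ ≤ 1 :=
    mul_add_mul_add_mul_le_one
      (norm_trace_mul_sq_add_sq_add_sq_le_one (hρA i).1 (hρA i).2 hXA hYA hZA hXA2 hYA2 hZA2
        hXYA hXZA hYZA)
      (norm_trace_mul_sq_add_sq_add_sq_le_one (hρB i).1 (hρB i).2 hXB hYB hZB hXB2 hYB2 hZB2
        hXYB hXZB hYZB)
  calc _ ≤ ∑ i, p i * (‖(ρA i * XA).trace‖ * ‖(ρB i * XB).trace‖) +
          ∑ i, p i * (‖(ρA i * YA).trace‖ * ‖(ρB i * YB).trace‖) +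
          ∑ i, p i * (‖(ρA i * ZA).trace‖ * ‖(ρB i * ZB).trace‖) := by
        gcongr <;> exact norm_trace_sum_smul_kronecker_mul_le hp ρA ρB _ _
    _ ≤ ∑ i, p i * 1 := by
        simp only [← Finset.sum_add_distrib, ← mul_add]
        gcongr with i
        · exact hp i
        · exact hproduct i
    _ = 1 := by simp [hp1]
end

section
/- The largest squared Schmidt coefficient of the four-qubit state |Φ⟩ = (√SWAP†)_{2,3}(|φ_Bell⟩_{12} ⊗ |φ_Bell⟩_{34}) with respect to the bipartition {1,2}|{3,4} equals 5/8. Equivalently, the largest eigenvalue of the reduced density matrix Tr_{3,4}(|Φ⟩⟨Φ|) is 5/8. -/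
open Matrix Complex

noncomputable section

/-- The Bell state `(|01⟩ + |10⟩)/√2`. -/
def bell : Fin 2 × Fin 2 → ℂ :=
  fun p => if p.1 ≠ p.2 then (1 / (Real.sqrt 2 : ℂ)) else 0

/-- `√SWAP†` as a two-qubit matrix (basis order `|00⟩, |10⟩, |01⟩, |11⟩`). -/
def sqrtSwapDag : Matrix (Fin 2 × Fin 2) (Fin 2 × Fin 2) ℂ :=
  fun p q =>
    (!![1, 0, 0, 0;
        0, (1 - I)/2, (1 + I)/2, 0;
        0, (1 + I)/2, (1 - I)/2, 0;
        0, 0, 0, 1] : Matrix (Fin 4) (Fin 4) ℂ)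
      ⟨p.1.val + 2 * p.2.val, by have := p.1.isLt; have := p.2.isLt; omega⟩
      ⟨q.1.val + 2 * q.2.val, by have := q.1.isLt; have := q.2.isLt; omega⟩

/-- Index type for four qubits. -/
abbrev Q4 := Fin 2 × Fin 2 × Fin 2 × Fin 2

/-- The product of two Bell pairs `|φ_Bell⟩₁₂ ⊗ |φ_Bell⟩₃₄`. -/
def bellPairs : Q4 → ℂ := fun x => bell (x.1, x.2.1) * bell (x.2.2.1, x.2.2.2)

/-- `√SWAP†` acting on qubits 2 and 3 of the four-qubit system. -/
def U23of4 : Matrix Q4 Q4 ℂ := fun x y =>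
  (if x.1 = y.1 then 1 else 0) * sqrtSwapDag (x.2.1, x.2.2.1) (y.2.1, y.2.2.1) *
    (if x.2.2.2 = y.2.2.2 then 1 else 0)

/-- The four-qubit state `|Φ⟩ = (√SWAP†)₂₃ (|φ_Bell⟩₁₂ ⊗ |φ_Bell⟩₃₄)`. -/
def Phi : Q4 → ℂ := U23of4.mulVec bellPairs

/-- The reduced density matrix of `|Φ⟩⟨Φ|` on qubits 1, 2 (partial trace over 3, 4). -/
def rho12 : Matrix (Fin 2 × Fin 2) (Fin 2 × Fin 2) ℂ := fun a b =>
  ∑ c : Fin 2, ∑ d : Fin 2,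
    Phi (a.1, a.2, c, d) * starRingEnd ℂ (Phi (b.1, b.2, c, d))

/- `ρ₁₂ = ½ |φ_Bell⟩⟨φ_Bell| + ⅛ 𝟙`. For a unit vector `u` and `a ≥ 0`, any eigenvector `v` of
`a |u⟩⟨u| + b` either has `⟨u, v⟩ ≠ 0`, and then pairing with `u` forces the eigenvalue `a + b`,
or is orthogonal to `u`, and then has eigenvalue `b`. Hence the top of the spectrum is
`½ + ⅛ = 5/8`. -/

theorem mulVec_smul_vecMulVec_add_smul_one {R ι : Type*} [CommSemiring R] [Fintype ι]
    [DecidableEq ι] (u w v : ι → R) (a b : R) :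
    (a • vecMulVec u w + b • 1) *ᵥ v = (a * (w ⬝ᵥ v)) • u + b • v := by
  rw [add_mulVec, smul_mulVec, smul_mulVec, vecMulVec_mulVec, one_mulVec, op_smul_eq_smul,
    smul_smul]

theorem isGreatest_eigenvalues_smul_vecMulVec_star_add_smul_one {𝕜 ι : Type*} [RCLike 𝕜]
    [Fintype ι] [DecidableEq ι] {u : ι → 𝕜} (hu : star u ⬝ᵥ u = 1) {a : ℝ} (ha : 0 ≤ a)
    (b : ℝ) :
    IsGreatest {μ : ℝ | ∃ v : ι → 𝕜, v ≠ 0 ∧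
      ((a : 𝕜) • vecMulVec u (star u) + (b : 𝕜) • 1) *ᵥ v = (μ : 𝕜) • v} (a + b) := by
  refine ⟨⟨u, ?_, ?_⟩, ?_⟩
  · rintro rfl
    simp at hu
  · rw [mulVec_smul_vecMulVec_add_smul_one, hu, RCLike.ofReal_add, add_smul, mul_one]
  · rintro μ ⟨v, hv, hμ⟩
    rw [mulVec_smul_vecMulVec_add_smul_one] at hμ
    have hproj : ((a + b - μ : ℝ) : 𝕜) * (star u ⬝ᵥ v) = 0 := by
      have := congrArg (star u ⬝ᵥ ·) hμ
      simp only [dotProduct_add, dotProduct_smul, hu, smul_eq_mul] at this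
      push_cast
      linear_combination this
    rcases mul_eq_zero.mp hproj with htop | horth
    · have : a + b - μ = 0 := by exact_mod_cast htop
      linarith
    · rw [horth, mul_zero, zero_smul, zero_add] at hμ
      obtain ⟨i, hi⟩ := Function.ne_iff.mp hv
      have : (b : 𝕜) = μ := mul_right_cancel₀ hi (congrFun hμ i)
      have : b = μ := by exact_mod_cast this
      linarith

theorem ofReal_sqrt_two_inv_mul_self : ((√2 : ℝ) : ℂ)⁻¹ * ((√2 : ℝ) : ℂ)⁻¹ = 2⁻¹ := by
  rw [← mul_inv, ← ofReal_mul, Real.mul_self_sqrt zero_le_two]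
  norm_num

theorem star_bell_dotProduct_bell : star bell ⬝ᵥ bell = 1 := by
  simp [dotProduct, Fintype.sum_prod_type, bell, ofReal_sqrt_two_inv_mul_self]
  norm_num

def phiCoeff : Q4 → ℂ
  | (0, 0, 1, 1) => (1 + I) / 4
  | (0, 1, 0, 1) => (1 - I) / 4
  | (0, 1, 1, 0) => 1 / 2
  | (1, 0, 0, 1) => 1 / 2
  | (1, 0, 1, 0) => (1 - I) / 4
  | (1, 1, 0, 0) => (1 + I) / 4
  | _ => 0

theorem Phi_eq_phiCoeff : Phi = phiCoeff := by
  funext ⟨a, b, c, d⟩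
  fin_cases a <;> fin_cases b <;> fin_cases c <;> fin_cases d <;>
    simp [Phi, mulVec, dotProduct, Fintype.sum_prod_type, U23of4, sqrtSwapDag, bellPairs, bell,
      phiCoeff, ofReal_sqrt_two_inv_mul_self] <;> ring

theorem rho12_eq_smul_vecMulVec_bell_add_smul_one :
    rho12 = ((1 / 2 : ℝ) : ℂ) • vecMulVec bell (star bell) + ((1 / 8 : ℝ) : ℂ) • 1 := by
  funext ⟨a, b⟩ ⟨c, d⟩
  fin_cases a <;> fin_cases b <;> fin_cases c <;> fin_cases d <;>
    simp [rho12, Phi_eq_phiCoeff, phiCoeff, Fin.sum_univ_two, vecMulVec, bell, one_apply,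
      map_ofNat, ofReal_sqrt_two_inv_mul_self, Complex.ext_iff] <;> norm_num

/-- The largest squared Schmidt coefficient of `|Φ⟩` across the bipartition
`{1,2} | {3,4}`, i.e. the largest eigenvalue of the reduced density matrix
`ρ₁₂ = Tr₃₄ |Φ⟩⟨Φ|`, equals `5/8`. -/
theorem stmt15 :
    IsGreatest {μ : ℝ | ∃ v : Fin 2 × Fin 2 → ℂ, v ≠ 0 ∧
      rho12.mulVec v = (μ : ℂ) • v} (5 / 8) := by
  rw [show (5 / 8 : ℝ) = 1 / 2 + 1 / 8 by norm_num, rho12_eq_smul_vecMulVec_bell_add_smul_one]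
  exact isGreatest_eigenvalues_smul_vecMulVec_star_add_smul_one star_bell_dotProduct_bell
    (a := 1 / 2) (by norm_num) (1 / 8)
end
end
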